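/- In the setting of mixed-logit demand with log-normal mixing, for k ≠ j the cross derivative satisfies ∂_{p_k} q_j(p) = M ∫₀^∞ α σ_j(p,α) σ_k(p,α) f(α) dα ≥ 0, and there is a constant C > 0 (depending on δ, M) such that along any ray p ∈ ℝ_{++}^J, 0 ≤ ∂_{p_k} q_j(λ p) ≤ C (−L'(c_{jk} λ p_j)) for all λ > 0, where c_{jk} = (p_j + p_k)/p_j > 1 and L is the log-normal Laplace transform. Consequently the cross semi-elasticity η_{jk}(λ p) = ∂_{p_k} q_j(λ p)/q_j(λ p) → 0 as λ → ∞. -/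

import Mathlib

/-! Differentiating under the integral sign, with the integrable dominating function `α f(α)`
(the log-normal density has moments of all orders), gives `∂_{p_k} q_j = M ∫ α σ_j σ_k f`.
Bounding each share by its numerator, `σ_j σ_k ≤ e^{δ_j+δ_k} e^{-α(p_j+p_k)}`, and the right side
integrates to `-L'(p_j+p_k)`. For the semi-elasticity, `α e^{-α p_k} ≤ 1/p_k` gives
`-L'(p_j+p_k) ≤ L(p_j)/p_k`, while at nonnegative prices `q_j ≥ M e^{δ_j} L(p_j)/(1 + Σ e^{δ_l})`;
hence `η_{jk}(λp) = O(1/λ)`. -/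

open MeasureTheory Real Filter

/-- Density of the log-normal distribution with parameters `μ` and `σ` on `(0, ∞)`. -/
noncomputable def lognormalPdf (μ σ : ℝ) (α : ℝ) : ℝ :=
  (1 / (α * σ * Real.sqrt (2 * Real.pi))) * Real.exp (-(Real.log α - μ) ^ 2 / (2 * σ ^ 2))

/-- Laplace transform of the log-normal distribution. -/
noncomputable def lnLaplace (μ σ : ℝ) (x : ℝ) : ℝ :=
  ∫ α in Set.Ioi (0 : ℝ), Real.exp (-α * x) * lognormalPdf μ σ α

/-- Logit choice probability of product `j` at prices `p`, mean utilities `δ`,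
and price coefficient `α`. -/
noncomputable def logitShare {J : ℕ} (δ : Fin J → ℝ) (j : Fin J) (p : Fin J → ℝ) (α : ℝ) : ℝ :=
  Real.exp (δ j - α * p j) / (1 + ∑ l, Real.exp (δ l - α * p l))

/-- Mixed-logit demand for product `j` with log-normal mixing over the price coefficient. -/
noncomputable def qLN {J : ℕ} (δ : Fin J → ℝ) (M μ σ : ℝ) (j : Fin J) (p : Fin J → ℝ) : ℝ :=
  M * ∫ α in Set.Ioi (0 : ℝ), logitShare δ j p α * lognormalPdf μ σ α

/-- Partial derivative of `F : (Fin J → ℝ) → ℝ` in the `k`-th coordinate at `p`. -/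
noncomputable def pd {J : ℕ} (F : (Fin J → ℝ) → ℝ) (k : Fin J) (p : Fin J → ℝ) : ℝ :=
  deriv (fun t => F (Function.update p k t)) (p k)

open Set

section Lognormal

variable {μ σ : ℝ}

lemma lognormalPdf_pos (hσ : 0 < σ) {α : ℝ} (hα : 0 < α) : 0 < lognormalPdf μ σ α := by
  have := Real.sqrt_pos.2 (by positivity : (0:ℝ) < 2 * π)
  unfold lognormalPdf
  positivity

lemma lognormalPdf_nonneg (hσ : 0 < σ) : ∀ α ∈ Ioi (0:ℝ), 0 ≤ lognormalPdf μ σ α :=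
  fun _ hα => (lognormalPdf_pos hσ hα).le

lemma measurable_lognormalPdf : Measurable (lognormalPdf μ σ) := by
  unfold lognormalPdf
  fun_prop

/-- Completing the square in `log α` bounds the density by every power of `α`. -/
lemma lognormalPdf_le_rpow (hσ : 0 < σ) (r : ℝ) {α : ℝ} (hα : 0 < α) :
    lognormalPdf μ σ α ≤
      exp ((r + 1) ^ 2 * σ ^ 2 / 2 - (r + 1) * μ) / (σ * sqrt (2 * π)) * α ^ r := by
  have hs : 0 < σ * sqrt (2 * π) := mul_pos hσ (Real.sqrt_pos.2 (by positivity))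
  obtain ⟨y, rfl⟩ : ∃ y, α = exp y := ⟨log α, (exp_log hα).symm⟩
  have hsq : -(y - μ) ^ 2 / (2 * σ ^ 2) - y ≤ (r + 1) ^ 2 * σ ^ 2 / 2 - (r + 1) * μ + r * y := by
    rw [sub_le_iff_le_add, div_le_iff₀ (by positivity)]
    nlinarith [sq_nonneg (y - μ + (r + 1) * σ ^ 2)]
  calc lognormalPdf μ σ (exp y) = exp (-(y - μ) ^ 2 / (2 * σ ^ 2) - y) / (σ * sqrt (2 * π)) := by
        rw [lognormalPdf, log_exp, exp_sub]
        field_simp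
    _ ≤ exp ((r + 1) ^ 2 * σ ^ 2 / 2 - (r + 1) * μ + r * y) / (σ * sqrt (2 * π)) := by
        gcongr
    _ = _ := by
        rw [exp_add, rpow_def_of_pos (exp_pos y), log_exp, mul_comm y r]
        ring

lemma integrableOn_Ioi_of_le_const_of_le_rpow {g : ℝ → ℝ} (hg : Measurable g) {C₁ C₂ : ℝ}
    (h₁ : ∀ α ∈ Ioc (0:ℝ) 1, ‖g α‖ ≤ C₁) (h₂ : ∀ α ∈ Ioi (1:ℝ), ‖g α‖ ≤ C₂ * α ^ (-2:ℝ)) :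
    IntegrableOn g (Ioi 0) := by
  rw [← Ioc_union_Ioi_eq_Ioi zero_le_one]
  refine IntegrableOn.union ?_ ?_
  · refine Measure.integrableOn_of_bounded measure_Ioc_lt_top.ne hg.aestronglyMeasurable
      (M := C₁) ?_
    filter_upwards [ae_restrict_mem measurableSet_Ioc] using h₁
  · refine Integrable.mono'
      ((integrableOn_Ioi_rpow_of_lt (by norm_num : (-2:ℝ) < -1) one_pos).const_mul C₂)
      hg.aestronglyMeasurable ?_
    filter_upwards [ae_restrict_mem measurableSet_Ioi] using h₂

lemma integrableOn_rpow_mul_lognormalPdf (hσ : 0 < σ) (s : ℝ) :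
    IntegrableOn (fun α => α ^ s * lognormalPdf μ σ α) (Ioi 0) := by
  have hbound : ∀ r α, 0 < α → ‖α ^ s * lognormalPdf μ σ α‖ ≤
      exp ((r + 1) ^ 2 * σ ^ 2 / 2 - (r + 1) * μ) / (σ * sqrt (2 * π)) * α ^ (s + r) := by
    intro r α hα
    rw [norm_of_nonneg (by positivity [(lognormalPdf_pos (μ := μ) hσ hα).le]), rpow_add hα]
    calc α ^ s * lognormalPdf μ σ α
        ≤ α ^ s * (exp ((r + 1) ^ 2 * σ ^ 2 / 2 - (r + 1) * μ) / (σ * sqrt (2 * π)) * α ^ r) := by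
          gcongr
          exact lognormalPdf_le_rpow hσ r hα
      _ = _ := by ring
  refine integrableOn_Ioi_of_le_const_of_le_rpow
    ((measurable_id.pow_const s).mul measurable_lognormalPdf)
    (C₁ := exp ((-s + 1) ^ 2 * σ ^ 2 / 2 - (-s + 1) * μ) / (σ * sqrt (2 * π)))
    (C₂ := exp ((-s - 2 + 1) ^ 2 * σ ^ 2 / 2 - (-s - 2 + 1) * μ) / (σ * sqrt (2 * π)))
    (fun α hα => ?_) (fun α hα => ?_)
  · simpa using hbound (-s) α hα.1
  · convert hbound (-s - 2) α (one_pos.trans hα) using 3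
    ring

lemma integrableOn_lognormalPdf (hσ : 0 < σ) : IntegrableOn (lognormalPdf μ σ) (Ioi 0) := by
  simpa using integrableOn_rpow_mul_lognormalPdf (μ := μ) hσ 0

lemma integrableOn_mul_lognormalPdf (hσ : 0 < σ) :
    IntegrableOn (fun α => α * lognormalPdf μ σ α) (Ioi 0) := by
  simpa using integrableOn_rpow_mul_lognormalPdf (μ := μ) hσ 1

end Lognormal

section Logit

variable {J : ℕ} (δ : Fin J → ℝ) {j k : Fin J} (p : Fin J → ℝ) (α : ℝ)

lemma one_add_sum_exp_pos : 0 < 1 + ∑ l, exp (δ l - α * p l) := by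
  positivity

lemma logitShare_pos : 0 < logitShare δ j p α :=
  div_pos (exp_pos _) (one_add_sum_exp_pos δ p α)

lemma logitShare_le_one : logitShare δ j p α ≤ 1 := by
  rw [logitShare, div_le_one (one_add_sum_exp_pos δ p α)]
  have := Finset.single_le_sum (f := fun l => exp (δ l - α * p l))
    (fun l _ => (exp_pos _).le) (Finset.mem_univ j)
  linarith

lemma logitShare_le_exp : logitShare δ j p α ≤ exp (δ j - α * p j) :=
  div_le_self (exp_pos _).le (le_add_of_nonneg_right (by positivity))

lemma exp_div_le_logitShare {α : ℝ} (hα : 0 ≤ α) {p : Fin J → ℝ} (hp : ∀ i, 0 ≤ p i) :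
    exp (δ j - α * p j) / (1 + ∑ l, exp (δ l)) ≤ logitShare δ j p α := by
  refine div_le_div_of_nonneg_left (exp_pos _).le (one_add_sum_exp_pos δ p α) ?_
  gcongr with l
  linarith [mul_nonneg hα (hp l)]

lemma logitShare_mul_logitShare_le :
    logitShare δ j p α * logitShare δ k p α ≤ exp (δ j + δ k) * exp (-α * (p j + p k)) := by
  calc logitShare δ j p α * logitShare δ k p α
      ≤ exp (δ j - α * p j) * exp (δ k - α * p k) :=
        mul_le_mul (logitShare_le_exp δ p α) (logitShare_le_exp δ p α)
          (logitShare_pos δ p α).le (exp_pos _).le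
    _ = exp (δ j + δ k) * exp (-α * (p j + p k)) := by
        rw [← exp_add, ← exp_add]
        ring_nf

@[fun_prop]
lemma continuous_logitShare : Continuous (logitShare δ j p) :=
  Continuous.div (by fun_prop) (by fun_prop) fun α => (one_add_sum_exp_pos δ p α).ne'

lemma hasDerivAt_logitShare_update (hkj : k ≠ j) (t : ℝ) :
    HasDerivAt (fun t => logitShare δ j (Function.update p k t) α)
      (α * (logitShare δ j (Function.update p k t) α *
        logitShare δ k (Function.update p k t) α)) t := by
  set A := 1 + ∑ l ∈ Finset.univ.erase k, exp (δ l - α * p l)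
  have hden : ∀ s, 1 + ∑ l, exp (δ l - α * Function.update p k s l) = A + exp (δ k - α * s) := by
    intro s
    rw [← Finset.add_sum_erase _ _ (Finset.mem_univ k), Function.update_self,
      Finset.sum_congr rfl fun l hl => by rw [Function.update_of_ne (Finset.ne_of_mem_erase hl)]]
    ring
  have hshare : ∀ i s, logitShare δ i (Function.update p k s) α =
      exp (δ i - α * Function.update p k s i) / (A + exp (δ k - α * s)) :=
    fun i s => by rw [logitShare, hden]
  have hA : A + exp (δ k - α * t) ≠ 0 := hden t ▸ (one_add_sum_exp_pos δ _ α).ne'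
  have hd : HasDerivAt (fun s => A + exp (δ k - α * s)) (-(α * exp (δ k - α * t))) t := by
    simpa [mul_comm] using (((hasDerivAt_id t).const_mul α).const_sub (δ k)).exp.const_add A
  simp only [hshare, Function.update_of_ne hkj.symm, Function.update_self]
  refine ((hasDerivAt_const t (exp (δ j - α * p j))).div hd hA).congr_deriv ?_
  field_simp
  ring

end Logit

section Mixing

variable {f : ℝ → ℝ}

lemma norm_exp_neg_mul_le_one {α x : ℝ} (hα : 0 ≤ α) (hx : 0 ≤ x) : ‖exp (-α * x)‖ ≤ 1 := by
  rw [norm_of_nonneg (exp_pos _).le, exp_le_one_iff]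
  nlinarith

lemma integrableOn_exp_neg_mul_mul (hf : IntegrableOn f (Ioi 0)) {x : ℝ} (hx : 0 ≤ x) :
    IntegrableOn (fun α => exp (-α * x) * f α) (Ioi 0) :=
  hf.bdd_mul (by fun_prop : Continuous fun α : ℝ => exp (-α * x)).aestronglyMeasurable
    (c := 1) (by filter_upwards [ae_restrict_mem measurableSet_Ioi] with α hα
                 using norm_exp_neg_mul_le_one (le_of_lt hα) hx)

lemma integrableOn_mul_exp_neg_mul_mul (hf1 : IntegrableOn (fun α => α * f α) (Ioi 0)) {x : ℝ}
    (hx : 0 ≤ x) : IntegrableOn (fun α => α * exp (-α * x) * f α) (Ioi 0) := by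
  refine (hf1.bdd_mul (by fun_prop : Continuous fun α : ℝ => exp (-α * x)).aestronglyMeasurable
    (c := 1) ?_).congr (Eventually.of_forall fun α => by ring)
  filter_upwards [ae_restrict_mem measurableSet_Ioi] with α hα
  exact norm_exp_neg_mul_le_one (le_of_lt hα) hx

lemma integral_exp_neg_mul_mul_pos (hf : IntegrableOn f (Ioi 0))
    (hf_pos : ∀ α ∈ Ioi (0:ℝ), 0 < f α) {x : ℝ} (hx : 0 ≤ x) :
    0 < ∫ α in Ioi 0, exp (-α * x) * f α := by
  rw [setIntegral_pos_iff_support_of_nonneg_ae ?_ (integrableOn_exp_neg_mul_mul hf hx)]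
  · have hsupp : Ioi 0 ⊆ Function.support fun α => exp (-α * x) * f α :=
      fun α hα => (mul_pos (exp_pos _) (hf_pos α hα)).ne'
    rw [inter_eq_right.2 hsupp]
    simp
  · filter_upwards [ae_restrict_mem measurableSet_Ioi] with α hα
    exact mul_nonneg (exp_pos _).le (hf_pos α hα).le

lemma hasDerivAt_integral_exp_neg_mul_mul (hf : IntegrableOn f (Ioi 0))
    (hf1 : IntegrableOn (fun α => α * f α) (Ioi 0)) {x : ℝ} (hx : 0 < x) :
    HasDerivAt (fun x => ∫ α in Ioi 0, exp (-α * x) * f α)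
      (-∫ α in Ioi 0, α * exp (-α * x) * f α) x := by
  have h := hasDerivAt_integral_of_dominated_loc_of_deriv_le (μ := volume.restrict (Ioi 0))
    (F := fun x α => exp (-α * x) * f α) (F' := fun x α => -(α * exp (-α * x) * f α))
    (bound := fun α => ‖α * f α‖) (Ioi_mem_nhds hx)
    (Eventually.of_forall fun t => (Continuous.aestronglyMeasurable (by fun_prop)).mul
      hf.aestronglyMeasurable)
    (integrableOn_exp_neg_mul_mul hf hx.le)
    (integrableOn_mul_exp_neg_mul_mul hf1 hx.le).neg.aestronglyMeasurable ?_ hf1.norm ?_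
  · simpa only [integral_neg] using h.2
  · filter_upwards [ae_restrict_mem measurableSet_Ioi] with α hα t ht
    rw [norm_neg, show α * exp (-α * t) * f α = exp (-α * t) * (α * f α) by ring, norm_mul]
    exact mul_le_of_le_one_left (norm_nonneg _)
      (norm_exp_neg_mul_le_one (le_of_lt hα) (le_of_lt ht))
  · refine Eventually.of_forall fun α t _ => ?_
    refine ((((hasDerivAt_id t).const_mul (-α)).exp).mul_const (f α)).congr_deriv ?_
    simp only [id_eq]
    ring

lemma mul_exp_neg_mul_le_inv {α b : ℝ} (hb : 0 < b) : α * exp (-α * b) ≤ b⁻¹ := by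
  have h : α * b ≤ exp (α * b) := (le_add_of_nonneg_right zero_le_one).trans (add_one_le_exp _)
  rw [← one_div, le_div_iff₀ hb]
  calc α * exp (-α * b) * b = α * b * exp (-(α * b)) := by ring_nf
    _ ≤ exp (α * b) * exp (-(α * b)) := by gcongr
    _ = 1 := by rw [← exp_add, add_neg_cancel, exp_zero]

lemma integral_mul_exp_neg_mul_mul_le (hf : IntegrableOn f (Ioi 0))
    (hf0 : ∀ α ∈ Ioi (0:ℝ), 0 ≤ f α) {a b : ℝ} (ha : 0 ≤ a) (hb : 0 < b) :
    ∫ α in Ioi 0, α * exp (-α * (a + b)) * f α ≤ (∫ α in Ioi 0, exp (-α * a) * f α) / b := by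
  rw [← integral_div]
  refine setIntegral_mono_of_nonneg (fun α hα => ?_) (fun α hα => ?_)
    ((integrableOn_exp_neg_mul_mul hf ha).div_const b)
  · have := hf0 α hα
    have : (0:ℝ) < α := hα
    positivity
  · calc α * exp (-α * (a + b)) * f α = (α * exp (-α * b)) * (exp (-α * a) * f α) := by
          rw [mul_add, exp_add]
          ring
      _ ≤ b⁻¹ * (exp (-α * a) * f α) := by
          gcongr
          · exact mul_nonneg (exp_pos _).le (hf0 α hα)
          · exact mul_exp_neg_mul_le_inv hb
      _ = exp (-α * a) * f α / b := by ring

variable {J : ℕ} (δ : Fin J → ℝ) {j k : Fin J}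

lemma integrableOn_logitShare_mul (hf : IntegrableOn f (Ioi 0)) (p : Fin J → ℝ) :
    IntegrableOn (fun α => logitShare δ j p α * f α) (Ioi 0) :=
  hf.bdd_mul (continuous_logitShare δ p).aestronglyMeasurable (c := 1) <| Eventually.of_forall
    fun α => by rw [norm_of_nonneg (logitShare_pos δ p α).le]; exact logitShare_le_one δ p α

lemma hasDerivAt_integral_logitShare_update (hf : IntegrableOn f (Ioi 0))
    (hf1 : IntegrableOn (fun α => α * f α) (Ioi 0)) (hkj : k ≠ j) (p : Fin J → ℝ) :
    HasDerivAt (fun t => ∫ α in Ioi 0, logitShare δ j (Function.update p k t) α * f α)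
      (∫ α in Ioi 0, α * (logitShare δ j p α * logitShare δ k p α) * f α) (p k) := by
  have h := hasDerivAt_integral_of_dominated_loc_of_deriv_le (μ := volume.restrict (Ioi 0))
    (F := fun t α => logitShare δ j (Function.update p k t) α * f α)
    (F' := fun t α => α * (logitShare δ j (Function.update p k t) α *
      logitShare δ k (Function.update p k t) α) * f α)
    (x₀ := p k) (bound := fun α => ‖α * f α‖) univ_mem
    (Eventually.of_forall fun t => (integrableOn_logitShare_mul δ hf _).aestronglyMeasurable)
    (integrableOn_logitShare_mul δ hf _) ?_ ?_ hf1.norm ?_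
  · simpa only [Function.update_eq_self] using h.2
  · exact (Continuous.aestronglyMeasurable (by fun_prop)).mul hf.aestronglyMeasurable
  · refine Eventually.of_forall fun α t _ => ?_
    have hσ₁ := logitShare_le_one δ (Function.update p k t) α (j := j)
    have hσ₂ := logitShare_le_one δ (Function.update p k t) α (j := k)
    have h₁ := (logitShare_pos δ (Function.update p k t) α (j := j)).le
    have h₂ := (logitShare_pos δ (Function.update p k t) α (j := k)).le
    rw [mul_comm α, mul_assoc, norm_mul, norm_of_nonneg (mul_nonneg h₁ h₂)]
    exact mul_le_of_le_one_left (norm_nonneg _) (mul_le_one₀ hσ₁ h₂ hσ₂)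
  · exact Eventually.of_forall fun α t _ =>
      (hasDerivAt_logitShare_update δ _ α hkj t).mul_const (f α)

lemma integral_cross_nonneg (hf0 : ∀ α ∈ Ioi (0:ℝ), 0 ≤ f α) (p : Fin J → ℝ) :
    0 ≤ ∫ α in Ioi 0, α * (logitShare δ j p α * logitShare δ k p α) * f α := by
  refine setIntegral_nonneg measurableSet_Ioi fun α hα => ?_
  have := hf0 α hα
  have := logitShare_pos δ p α (j := j)
  have := logitShare_pos δ p α (j := k)
  have : (0:ℝ) < α := hα
  positivity

lemma integral_cross_le (hf1 : IntegrableOn (fun α => α * f α) (Ioi 0))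
    (hf0 : ∀ α ∈ Ioi (0:ℝ), 0 ≤ f α) {p : Fin J → ℝ} (hp : 0 ≤ p j + p k) :
    ∫ α in Ioi 0, α * (logitShare δ j p α * logitShare δ k p α) * f α ≤
      exp (δ j + δ k) * ∫ α in Ioi 0, α * exp (-α * (p j + p k)) * f α := by
  rw [← integral_const_mul]
  refine setIntegral_mono_of_nonneg (fun α hα => ?_) (fun α hα => ?_)
    ((integrableOn_mul_exp_neg_mul_mul hf1 hp).const_mul _)
  · have := hf0 α hα
    have := logitShare_pos δ p α (j := j)
    have := logitShare_pos δ p α (j := k)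
    have : (0:ℝ) < α := hα
    positivity
  · have : (0:ℝ) < α := hα
    calc α * (logitShare δ j p α * logitShare δ k p α) * f α
        ≤ α * (exp (δ j + δ k) * exp (-α * (p j + p k))) * f α :=
          mul_le_mul_of_nonneg_right
            (mul_le_mul_of_nonneg_left (logitShare_mul_logitShare_le δ p α) this.le) (hf0 α hα)
      _ = _ := by ring

lemma integral_logitShare_mul_ge (hf : IntegrableOn f (Ioi 0))
    (hf0 : ∀ α ∈ Ioi (0:ℝ), 0 ≤ f α) {p : Fin J → ℝ} (hp : ∀ i, 0 ≤ p i) :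
    exp (δ j) / (1 + ∑ l, exp (δ l)) * ∫ α in Ioi 0, exp (-α * p j) * f α ≤
      ∫ α in Ioi 0, logitShare δ j p α * f α := by
  rw [← integral_const_mul]
  refine setIntegral_mono_of_nonneg (fun α hα => ?_) (fun α hα => ?_)
    (integrableOn_logitShare_mul δ hf p)
  · have := hf0 α hα
    positivity
  · calc exp (δ j) / (1 + ∑ l, exp (δ l)) * (exp (-α * p j) * f α)
        = exp (δ j - α * p j) / (1 + ∑ l, exp (δ l)) * f α := by
          rw [sub_eq_add_neg, exp_add, ← neg_mul]
          ring
      _ ≤ logitShare δ j p α * f α := by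
          gcongr
          · exact hf0 α hα
          · exact exp_div_le_logitShare δ (le_of_lt hα) hp

end Mixing

section Demand

variable {J : ℕ} {M μ σ : ℝ} (δ : Fin J → ℝ) {j k : Fin J}

lemma hasDerivAt_qLN_update (hσ : 0 < σ) (hkj : k ≠ j) (p : Fin J → ℝ) :
    HasDerivAt (fun t => qLN δ M μ σ j (Function.update p k t))
      (M * ∫ α in Ioi 0, α * (logitShare δ j p α * logitShare δ k p α) * lognormalPdf μ σ α)
      (p k) :=
  (hasDerivAt_integral_logitShare_update δ (integrableOn_lognormalPdf hσ)
    (integrableOn_mul_lognormalPdf hσ) hkj p).const_mul M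

lemma pd_qLN (hσ : 0 < σ) (hkj : k ≠ j) (p : Fin J → ℝ) :
    pd (qLN δ M μ σ j) k p =
      M * ∫ α in Ioi 0, α * (logitShare δ j p α * logitShare δ k p α) * lognormalPdf μ σ α :=
  (hasDerivAt_qLN_update δ hσ hkj p).deriv

lemma pd_qLN_nonneg (hM : 0 ≤ M) (hσ : 0 < σ) (hkj : k ≠ j) (p : Fin J → ℝ) :
    0 ≤ pd (qLN δ M μ σ j) k p := by
  rw [pd_qLN δ hσ hkj]
  exact mul_nonneg hM (integral_cross_nonneg δ (lognormalPdf_nonneg hσ) p)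

lemma deriv_lnLaplace (hσ : 0 < σ) {x : ℝ} (hx : 0 < x) :
    deriv (lnLaplace μ σ) x = -∫ α in Ioi 0, α * exp (-α * x) * lognormalPdf μ σ α :=
  (hasDerivAt_integral_exp_neg_mul_mul (integrableOn_lognormalPdf hσ)
    (integrableOn_mul_lognormalPdf hσ) hx).deriv

lemma lnLaplace_pos (hσ : 0 < σ) {x : ℝ} (hx : 0 ≤ x) : 0 < lnLaplace μ σ x :=
  integral_exp_neg_mul_mul_pos (integrableOn_lognormalPdf hσ)
    (fun _ hα => lognormalPdf_pos hσ hα) hx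

lemma neg_deriv_lnLaplace_add_le (hσ : 0 < σ) {a b : ℝ} (ha : 0 ≤ a) (hb : 0 < b) :
    -deriv (lnLaplace μ σ) (a + b) ≤ lnLaplace μ σ a / b := by
  rw [deriv_lnLaplace hσ (by linarith), neg_neg]
  exact integral_mul_exp_neg_mul_mul_le (integrableOn_lognormalPdf hσ)
    (lognormalPdf_nonneg hσ) ha hb

lemma pd_qLN_le_neg_deriv_lnLaplace (hM : 0 ≤ M) (hσ : 0 < σ) (hkj : k ≠ j) {p : Fin J → ℝ}
    (hp : 0 < p j + p k) :
    pd (qLN δ M μ σ j) k p ≤ M * exp (δ j + δ k) * -deriv (lnLaplace μ σ) (p j + p k) := by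
  rw [pd_qLN δ hσ hkj, deriv_lnLaplace hσ hp, neg_neg, mul_assoc]
  exact mul_le_mul_of_nonneg_left (integral_cross_le δ (integrableOn_mul_lognormalPdf hσ)
    (lognormalPdf_nonneg hσ) hp.le) hM

lemma qLN_ge (hM : 0 ≤ M) (hσ : 0 < σ) {p : Fin J → ℝ} (hp : ∀ i, 0 ≤ p i) :
    M * (exp (δ j) / (1 + ∑ l, exp (δ l)) * lnLaplace μ σ (p j)) ≤ qLN δ M μ σ j p :=
  mul_le_mul_of_nonneg_left
    (integral_logitShare_mul_ge δ (integrableOn_lognormalPdf hσ) (lognormalPdf_nonneg hσ) hp) hM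

lemma qLN_pos (hM : 0 < M) (hσ : 0 < σ) {p : Fin J → ℝ} (hp : ∀ i, 0 ≤ p i) :
    0 < qLN δ M μ σ j p := by
  have := lnLaplace_pos (μ := μ) hσ (hp j)
  exact lt_of_lt_of_le (by positivity) (qLN_ge δ hM.le hσ hp)

lemma pd_qLN_div_qLN_le (hM : 0 < M) (hσ : 0 < σ) (hkj : k ≠ j) {p : Fin J → ℝ}
    (hp : ∀ i, 0 < p i) :
    pd (qLN δ M μ σ j) k p / qLN δ M μ σ j p ≤ exp (δ k) * (1 + ∑ l, exp (δ l)) / p k := by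
  have hpk := hp k
  have hq := qLN_ge δ hM.le hσ (μ := μ) (j := j) fun i => (hp i).le
  have hpd : pd (qLN δ M μ σ j) k p ≤ M * exp (δ j + δ k) * (lnLaplace μ σ (p j) / p k) :=
    (pd_qLN_le_neg_deriv_lnLaplace δ hM.le hσ hkj (add_pos (hp j) (hp k))).trans
      (mul_le_mul_of_nonneg_left (neg_deriv_lnLaplace_add_le hσ (hp j).le (hp k)) (by positivity))
  rw [div_le_iff₀ (qLN_pos δ hM hσ fun i => (hp i).le)]
  refine hpd.trans (le_trans (le_of_eq ?_) (mul_le_mul_of_nonneg_left hq (by positivity)))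
  field_simp
  rw [exp_add]
  ring

lemma tendsto_pd_qLN_div_qLN_smul (hM : 0 < M) (hσ : 0 < σ) (hkj : k ≠ j) {p : Fin J → ℝ}
    (hp : ∀ i, 0 < p i) :
    Tendsto (fun l : ℝ => pd (qLN δ M μ σ j) k (l • p) / qLN δ M μ σ j (l • p)) atTop (nhds 0) := by
  have hray : ∀ l > (0:ℝ), ∀ i, 0 < (l • p) i := fun l hl i => mul_pos hl (hp i)
  have hlower : ∀ᶠ l : ℝ in atTop, 0 ≤ pd (qLN δ M μ σ j) k (l • p) / qLN δ M μ σ j (l • p) := by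
    filter_upwards [eventually_gt_atTop 0] with l hl
    exact div_nonneg (pd_qLN_nonneg δ hM.le hσ hkj _)
      (qLN_pos δ hM hσ fun i => (hray l hl i).le).le
  have hupper : ∀ᶠ l : ℝ in atTop, pd (qLN δ M μ σ j) k (l • p) / qLN δ M μ σ j (l • p) ≤
      exp (δ k) * (1 + ∑ i, exp (δ i)) / p k / l := by
    filter_upwards [eventually_gt_atTop 0] with l hl
    refine (pd_qLN_div_qLN_le δ hM hσ hkj (hray l hl)).trans_eq ?_
    simp only [Pi.smul_apply, smul_eq_mul]
    ring
  exact tendsto_of_tendsto_of_tendsto_of_le_of_le' tendsto_const_nhds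
    (tendsto_const_nhds.div_atTop tendsto_id) hlower hupper

end Demand

theorem qLN_cross_deriv_ray_general {J : ℕ} (M : ℝ) (hM : 0 < M) (δ : Fin J → ℝ)
    (μ σ : ℝ) (hσ : 0 < σ) (j k : Fin J) (hkj : k ≠ j) :
    (∀ p : Fin J → ℝ, (∀ i, 0 < p i) →
      HasDerivAt (fun t => qLN δ M μ σ j (Function.update p k t))
        (M * ∫ α in Set.Ioi (0 : ℝ),
          α * (logitShare δ j p α * logitShare δ k p α) * lognormalPdf μ σ α) (p k) ∧
      0 ≤ M * ∫ α in Set.Ioi (0 : ℝ),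
          α * (logitShare δ j p α * logitShare δ k p α) * lognormalPdf μ σ α) ∧
    (∃ C > (0 : ℝ), ∀ p : Fin J → ℝ, (∀ i, 0 < p i) →
      (1 < (p j + p k) / p j) ∧
      ∀ l > (0 : ℝ),
        0 ≤ pd (qLN δ M μ σ j) k (l • p) ∧
        pd (qLN δ M μ σ j) k (l • p)
          ≤ C * (-(deriv (lnLaplace μ σ) ((p j + p k) / p j * (l * p j))))) ∧
    (∀ p : Fin J → ℝ, (∀ i, 0 < p i) →
      Tendsto (fun l : ℝ => pd (qLN δ M μ σ j) k (l • p) / qLN δ M μ σ j (l • p))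
        atTop (nhds 0)) := by
  refine ⟨fun p _ => ⟨hasDerivAt_qLN_update δ hσ hkj p, pd_qLN δ hσ hkj p ▸
      pd_qLN_nonneg δ hM.le hσ hkj p⟩,
    ⟨M * exp (δ j + δ k), by positivity, fun p hp => ⟨?_, fun l hl => ?_⟩⟩, fun p hp => ?_⟩
  · exact (one_lt_div (hp j)).2 (lt_add_of_pos_right _ (hp k))
  · have hx : (p j + p k) / p j * (l * p j) = (l • p) j + (l • p) k := by
      simp only [Pi.smul_apply, smul_eq_mul]
      field_simp [(hp j).ne']
    rw [hx]
    exact ⟨pd_qLN_nonneg δ hM.le hσ hkj _,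
      pd_qLN_le_neg_deriv_lnLaplace δ hM.le hσ hkj 
        (add_pos (mul_pos hl (hp j)) (mul_pos hl (hp k)))⟩
  · exact tendsto_pd_qLN_div_qLN_smul δ hM hσ hkj hp

/-- For `k ≠ j`: the cross derivative `∂_{p_k} q_j(p) = M ∫ α σ_j σ_k f dα ≥ 0`;
there is a constant `C > 0` (depending on `δ, M`) such that along any ray,
`0 ≤ ∂_{p_k} q_j(λp) ≤ C (−L'(c_{jk} λ p_j))` with `c_{jk} = (p_j+p_k)/p_j > 1`;
consequently the cross semi-elasticity `η_{jk}(λp) → 0` as `λ → ∞`. -/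
theorem qLN_cross_deriv_ray {J : ℕ} (hJ : 1 ≤ J) (M : ℝ) (hM : 0 < M) (δ : Fin J → ℝ)
    (μ σ : ℝ) (hσ : 0 < σ) (j k : Fin J) (hkj : k ≠ j) :
    (∀ p : Fin J → ℝ, (∀ i, 0 < p i) →
      HasDerivAt (fun t => qLN δ M μ σ j (Function.update p k t))
        (M * ∫ α in Set.Ioi (0 : ℝ),
          α * (logitShare δ j p α * logitShare δ k p α) * lognormalPdf μ σ α) (p k) ∧
      0 ≤ M * ∫ α in Set.Ioi (0 : ℝ),
          α * (logitShare δ j p α * logitShare δ k p α) * lognormalPdf μ σ α) ∧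
    (∃ C > (0 : ℝ), ∀ p : Fin J → ℝ, (∀ i, 0 < p i) →
      (1 < (p j + p k) / p j) ∧
      ∀ l > (0 : ℝ),
        0 ≤ pd (qLN δ M μ σ j) k (l • p) ∧
        pd (qLN δ M μ σ j) k (l • p)
          ≤ C * (-(deriv (lnLaplace μ σ) ((p j + p k) / p j * (l * p j))))) ∧
    (∀ p : Fin J → ℝ, (∀ i, 0 < p i) →
      Tendsto (fun l : ℝ => pd (qLN δ M μ σ j) k (l • p) / qLN δ M μ σ j (l • p))
        atTop (nhds 0)) :=
  qLN_cross_deriv_ray_general M hM δ μ σ hσ j k hkj
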